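/- arXiv:1905.09608 — 4 statements merged into one kernel-verified Lean document; each statement's English description precedes it below -/
import Mathlib

section
/- Let X be a subspace of R^N with orthonormal basis matrix U, and let X1, X2 be subspaces of X that are orthogonal to each other, with orthonormal basis matrices U1 and U2. If Φ is an n×N matrix satisfying 1 − δ < s_min(ΦU)^2 ≤ s_max(ΦU)^2 < 1 + δ for δ ∈ (0,1), then the operator norm of U2^T Φ^T Φ U1 is at most δ. -/
/-!
The operator norm of `B = U2ᵀ Φᵀ Φ U1` is the supremum of `⟪B x, y⟫ = ⟪Φ u₁, Φ u₂⟫` over unit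
vectors `x, y`, where `u₁ = U1 x ∈ X1` and `u₂ = U2 y ∈ X2` are again unit vectors. As `U` maps
isometrically onto `X`, the hypothesis on `Φ U` says `|‖Φ v‖² - ‖v‖²| ≤ δ ‖v‖²` for `v ∈ X`.
Polarization, `4 ⟪Φ u₁, Φ u₂⟫ = ‖Φ (u₁ + u₂)‖² - ‖Φ (u₁ - u₂)‖²`, and `‖u₁ ± u₂‖² = 2` then
give `⟪Φ u₁, Φ u₂⟫ ≤ ((1 + δ) 2 - (1 - δ) 2) / 4 = δ`.
-/

noncomputable section
open scoped RealInnerProductSpace Matrix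

/-- The `j`-th column of a matrix, as a vector in Euclidean space. -/
def col {m k : ℕ} (A : Matrix (Fin m) (Fin k) ℝ) (j : Fin k) : EuclideanSpace ℝ (Fin m) :=
  WithLp.toLp 2 (fun i => A i j)

/-- Orthogonal projection onto a subspace, as an endomorphism. -/
def projE {m : ℕ} (K : Submodule ℝ (EuclideanSpace ℝ (Fin m))) :
    EuclideanSpace ℝ (Fin m) →ₗ[ℝ] EuclideanSpace ℝ (Fin m) :=
  K.subtype ∘ₗ (K.orthogonalProjectionOnto).toLinearMap

/-- Frobenius norm of a real matrix. -/
def frob {m k : ℕ} (A : Matrix (Fin m) (Fin k) ℝ) : ℝ :=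
  Real.sqrt (∑ i, ∑ j, (A i j) ^ 2)

/-- Operator (spectral) norm of a real matrix, w.r.t. Euclidean norms. -/
def opn {m k : ℕ} (A : Matrix (Fin m) (Fin k) ℝ) : ℝ :=
  ‖LinearMap.toContinuousLinearMap (Matrix.toEuclideanLin A)‖

section Polarization

variable {E F : Type*} [NormedAddCommGroup E] [InnerProductSpace ℝ E]
  [NormedAddCommGroup F] [InnerProductSpace ℝ F]

theorem abs_norm_sq_sub_norm_sq_le_of_unit {δ : ℝ} (S : E →ₗ[ℝ] F)
    (hS : ∀ x : E, ‖x‖ = 1 → 1 - δ < ‖S x‖ ^ 2 ∧ ‖S x‖ ^ 2 < 1 + δ) (x : E) :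
    |‖S x‖ ^ 2 - ‖x‖ ^ 2| ≤ δ * ‖x‖ ^ 2 := by
  rcases eq_or_ne x 0 with rfl | hx
  · simp
  obtain ⟨hlo, hhi⟩ := hS (‖x‖⁻¹ • x) (norm_smul_inv_norm hx)
  have hscale : ‖S (‖x‖⁻¹ • x)‖ ^ 2 = ‖S x‖ ^ 2 / ‖x‖ ^ 2 := by
    rw [map_smul, norm_smul, norm_inv, norm_norm, mul_pow, inv_pow, inv_mul_eq_div]
  rw [hscale, lt_div_iff₀ (by positivity)] at hlo
  rw [hscale, div_lt_iff₀ (by positivity)] at hhi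
  rw [abs_le]
  constructor <;> linarith

theorem inner_map_map_sub_inner_le {δ : ℝ} (T : E →ₗ[ℝ] F) (K : Submodule ℝ E)
    (hT : ∀ v ∈ K, |‖T v‖ ^ 2 - ‖v‖ ^ 2| ≤ δ * ‖v‖ ^ 2)
    {u w : E} (hu : u ∈ K) (hw : w ∈ K) (hu1 : ‖u‖ = 1) (hw1 : ‖w‖ = 1) :
    ⟪T u, T w⟫ - ⟪u, w⟫ ≤ δ := by
  have hadd := (abs_le.1 (hT _ (K.add_mem hu hw))).2
  have hsub := (abs_le.1 (hT _ (K.sub_mem hu hw))).1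
  rw [map_add, norm_add_sq_real, norm_add_sq_real] at hadd
  rw [map_sub, norm_sub_sq_real, norm_sub_sq_real] at hsub
  rw [hu1, hw1] at hadd hsub
  linarith

end Polarization

section MatrixColumns

variable {m k : ℕ}

theorem toEuclideanLin_apply_eq_sum_col (A : Matrix (Fin m) (Fin k) ℝ)
    (x : EuclideanSpace ℝ (Fin k)) :
    Matrix.toEuclideanLin A x = ∑ j, x j • col A j := by
  ext i
  simp [Matrix.mulVec, dotProduct, col, mul_comm]

theorem range_toEuclideanLin (A : Matrix (Fin m) (Fin k) ℝ) :
    LinearMap.range (Matrix.toEuclideanLin A) = Submodule.span ℝ (Set.range (col A)) := by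
  rw [← Fintype.range_linearCombination]
  ext v
  simp only [LinearMap.mem_range, toEuclideanLin_apply_eq_sum_col,
    Fintype.linearCombination_apply]
  constructor
  · rintro ⟨x, rfl⟩
    exact ⟨x.ofLp, rfl⟩
  · rintro ⟨c, rfl⟩
    exact ⟨WithLp.toLp 2 c, rfl⟩

theorem norm_toEuclideanLin_of_orthonormal {A : Matrix (Fin m) (Fin k) ℝ}
    (hA : Orthonormal ℝ (col A)) (x : EuclideanSpace ℝ (Fin k)) :
    ‖Matrix.toEuclideanLin A x‖ = ‖x‖ := by
  have h : ‖Matrix.toEuclideanLin A x‖ ^ 2 = ‖x‖ ^ 2 := by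
    rw [← real_inner_self_eq_norm_sq, toEuclideanLin_apply_eq_sum_col, hA.inner_sum,
      EuclideanSpace.norm_sq_eq]
    simp [sq]
  exact (sq_eq_sq₀ (norm_nonneg _) (norm_nonneg _)).1 h

theorem toEuclideanLin_apply_mem_span_col (A : Matrix (Fin m) (Fin k) ℝ)
    (x : EuclideanSpace ℝ (Fin k)) :
    Matrix.toEuclideanLin A x ∈ Submodule.span ℝ (Set.range (col A)) :=
  range_toEuclideanLin A ▸ LinearMap.mem_range_self _ x

theorem inner_toEuclideanLin_transpose (A : Matrix (Fin m) (Fin k) ℝ)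
    (u : EuclideanSpace ℝ (Fin m)) (w : EuclideanSpace ℝ (Fin k)) :
    ⟪Matrix.toEuclideanLin Aᵀ u, w⟫ = ⟪u, Matrix.toEuclideanLin A w⟫ := by
  rw [← Matrix.conjTranspose_eq_transpose_of_trivial,
    Matrix.toEuclideanLin_conjTranspose_eq_adjoint, LinearMap.adjoint_inner_left]

end MatrixColumns

/-- For orthogonal subspaces `X1 ⊥ X2` of `X` on which `Φ` is a near-isometry,
`‖U2ᵀ Φᵀ Φ U1‖ ≤ δ`. -/
theorem cross_term_op_norm_le {N n d d1 d2 : ℕ} (δ : ℝ) (hδ : δ ∈ Set.Ioo (0 : ℝ) 1)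
    (X X1 X2 : Submodule ℝ (EuclideanSpace ℝ (Fin N)))
    (hX1 : X1 ≤ X) (hX2 : X2 ≤ X)
    (horth : ∀ u ∈ X1, ∀ v ∈ X2, ⟪u, v⟫ = 0)
    (U : Matrix (Fin N) (Fin d) ℝ)
    (hU : Orthonormal ℝ (col U)) (hs : Submodule.span ℝ (Set.range (col U)) = X)
    (U1 : Matrix (Fin N) (Fin d1) ℝ) (U2 : Matrix (Fin N) (Fin d2) ℝ)
    (hU1 : Orthonormal ℝ (col U1)) (hs1 : Submodule.span ℝ (Set.range (col U1)) = X1)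
    (hU2 : Orthonormal ℝ (col U2)) (hs2 : Submodule.span ℝ (Set.range (col U2)) = X2)
    (Φ : Matrix (Fin n) (Fin N) ℝ)
    (hiso : ∀ x : EuclideanSpace ℝ (Fin d), ‖x‖ = 1 →
      1 - δ < ‖Matrix.toEuclideanLin (Φ * U) x‖ ^ 2 ∧
      ‖Matrix.toEuclideanLin (Φ * U) x‖ ^ 2 < 1 + δ) :
    opn (U2ᵀ * Φᵀ * Φ * U1) ≤ δ := by
  have hΦ : ∀ v ∈ X, |‖Matrix.toEuclideanLin Φ v‖ ^ 2 - ‖v‖ ^ 2| ≤ δ * ‖v‖ ^ 2 := by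
    intro v hv
    obtain ⟨c, rfl⟩ : v ∈ LinearMap.range (Matrix.toEuclideanLin U) := by
      rwa [range_toEuclideanLin, hs]
    simpa [norm_toEuclideanLin_of_orthonormal hU] using
      abs_norm_sq_sub_norm_sq_le_of_unit _ hiso c
  refine ContinuousLinearMap.opNorm_le_of_re_inner_le hδ.1.le fun x y hx hy => ?_
  set u₁ := Matrix.toEuclideanLin U1 x
  set u₂ := Matrix.toEuclideanLin U2 y
  have hu₁ : u₁ ∈ X1 := hs1 ▸ toEuclideanLin_apply_mem_span_col U1 x
  have hu₂ : u₂ ∈ X2 := hs2 ▸ toEuclideanLin_apply_mem_span_col U2 y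
  calc RCLike.re ⟪Matrix.toEuclideanLin (U2ᵀ * Φᵀ * Φ * U1) x, y⟫
      = ⟪Matrix.toEuclideanLin Φ u₁, Matrix.toEuclideanLin Φ u₂⟫ - ⟪u₁, u₂⟫ := by
        simp only [RCLike.re_to_real, Matrix.toLpLin_mul_same, LinearMap.comp_apply,
          inner_toEuclideanLin_transpose, horth u₁ hu₁ u₂ hu₂, sub_zero, u₁, u₂]
    _ ≤ δ := inner_map_map_sub_inner_le _ X hΦ (hX1 hu₁) (hX2 hu₂)
        (by rw [norm_toEuclideanLin_of_orthonormal hU1, hx])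
        (by rw [norm_toEuclideanLin_of_orthonormal hU2, hy])
end
end

section
/- Let X be a subspace of R^N with orthonormal basis U, and let X1, X2 be mutually orthogonal subspaces of X. Suppose Φ ∈ R^{n×N} satisfies 1 − δ < s_min(ΦU)^2 ≤ s_max(ΦU)^2 < 1 + δ with δ ∈ (0,1/4). Then for every nonzero u ∈ X1, ||P_{Y2} Φ u|| ≤ (4/3) · δ · ||Φ u||, where Y2 = ΦX2. -/
noncomputable section
open scoped RealInnerProductSpace Matrix

/-! The restricted near-isometry `(1 - δ)‖u‖² ≤ ‖T u‖² ≤ (1 + δ)‖u‖²` on `X` makes `T` almost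
preserve inner products there: by polarization, `T` maps orthogonal vectors of `X` to vectors
with `⟪T u, T v⟫ ≤ δ‖u‖‖v‖`. If `p = T v` (`v ∈ X₂`) is the projection of `T u` onto `T X₂`, then
`‖p‖² = ⟪T u, T v⟫ ≤ δ‖u‖‖v‖`, and the lower bound `‖w‖² ≤ (4/3)‖T w‖²` for `δ ≤ 1/4` turns
this into `‖p‖² ≤ (4/3)δ‖T u‖‖p‖`. -/

section NearIsometry

variable {E F : Type*} [NormedAddCommGroup E] [NormedSpace ℝ E]
  [NormedAddCommGroup F] [NormedSpace ℝ F]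

def IsNearIsometryOn (T : E →ₗ[ℝ] F) (X : Submodule ℝ E) (δ : ℝ) : Prop :=
  ∀ u ∈ X, (1 - δ) * ‖u‖ ^ 2 ≤ ‖T u‖ ^ 2 ∧ ‖T u‖ ^ 2 ≤ (1 + δ) * ‖u‖ ^ 2

theorem sq_norm_map_eq_mul_sq_norm_map_normalize (T : E →ₗ[ℝ] F) (x : E) :
    ‖T x‖ ^ 2 = ‖x‖ ^ 2 * ‖T (‖x‖⁻¹ • x)‖ ^ 2 := by
  rcases eq_or_ne x 0 with rfl | hx
  · simp
  · rw [map_smul, norm_smul, norm_inv, norm_norm, mul_pow, ← mul_assoc, ← mul_pow,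
      mul_inv_cancel₀ (norm_ne_zero_iff.mpr hx), one_pow, one_mul]

theorem isNearIsometryOn_top_of_unit {T : E →ₗ[ℝ] F} {δ : ℝ}
    (h : ∀ x : E, ‖x‖ = 1 → 1 - δ < ‖T x‖ ^ 2 ∧ ‖T x‖ ^ 2 < 1 + δ) :
    IsNearIsometryOn T ⊤ δ := by
  intro x _
  rcases eq_or_ne x 0 with rfl | hx
  · simp
  obtain ⟨hlo, hhi⟩ := h (‖x‖⁻¹ • x) (by simpa using norm_smul_inv_norm (𝕜 := ℝ) hx)
  have hx2 : 0 ≤ ‖x‖ ^ 2 := sq_nonneg _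
  rw [sq_norm_map_eq_mul_sq_norm_map_normalize T x]
  constructor <;> nlinarith

theorem IsNearIsometryOn.range_of_isometry {G : Type*} [NormedAddCommGroup G]
    [NormedSpace ℝ G] {T : E →ₗ[ℝ] F} {V : G →ₗ[ℝ] E} {δ : ℝ}
    (hV : ∀ x, ‖V x‖ = ‖x‖) (h : IsNearIsometryOn (T ∘ₗ V) ⊤ δ) :
    IsNearIsometryOn T (LinearMap.range V) δ := by
  rintro _ ⟨x, rfl⟩
  simpa only [hV, LinearMap.comp_apply] using h x trivial

end NearIsometry

namespace IsNearIsometryOn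

variable {E F : Type*} [NormedAddCommGroup E] [InnerProductSpace ℝ E]
  [NormedAddCommGroup F] [InnerProductSpace ℝ F]
  {T : E →ₗ[ℝ] F} {X : Submodule ℝ E} {δ : ℝ} {u v : E}

theorem inner_map_le_of_inner_eq_zero (h : IsNearIsometryOn T X δ) (hu : u ∈ X) (hv : v ∈ X)
    (huv : ⟪u, v⟫ = 0) : ⟪T u, T v⟫ ≤ δ * (‖u‖ ^ 2 + ‖v‖ ^ 2) / 2 := by
  have hadd := (h (u + v) (X.add_mem hu hv)).2
  have hsub := (h (u - v) (X.sub_mem hu hv)).1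
  rw [map_add, norm_add_sq_real, norm_add_sq_real, huv] at hadd
  rw [map_sub, norm_sub_sq_real, norm_sub_sq_real, huv] at hsub
  linarith

theorem inner_map_le_mul_norm_of_inner_eq_zero (h : IsNearIsometryOn T X δ) (hu : u ∈ X)
    (hv : v ∈ X) (huv : ⟪u, v⟫ = 0) : ⟪T u, T v⟫ ≤ δ * ‖u‖ * ‖v‖ := by
  rcases eq_or_ne u 0 with rfl | hu0
  · simp
  rcases eq_or_ne v 0 with rfl | hv0
  · simp
  have hupos := norm_pos_iff.mpr hu0
  have hvpos := norm_pos_iff.mpr hv0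
  -- Balance the two norms before polarizing: `‖v‖ • u` and `‖u‖ • v` have the same length.
  have hb := h.inner_map_le_of_inner_eq_zero (X.smul_mem ‖v‖ hu) (X.smul_mem ‖u‖ hv)
    (by rw [real_inner_smul_left, real_inner_smul_right, huv, mul_zero, mul_zero])
  rw [map_smul, map_smul, real_inner_smul_left, real_inner_smul_right, norm_smul, norm_smul,
    norm_norm, norm_norm] at hb
  have hmul : ‖u‖ * ‖v‖ * ⟪T u, T v⟫ ≤ ‖u‖ * ‖v‖ * (δ * ‖u‖ * ‖v‖) := by linarith
  exact le_of_mul_le_mul_left hmul (mul_pos hupos hvpos)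

theorem sq_norm_le_mul_sq_norm_map (h : IsNearIsometryOn T X δ) (hδ : δ ≤ 1 / 4)
    (hu : u ∈ X) : ‖u‖ ^ 2 ≤ 4 / 3 * ‖T u‖ ^ 2 := by
  nlinarith [(h u hu).1, sq_nonneg ‖u‖]

theorem norm_mul_norm_le_mul_norm_map_mul_norm_map (h : IsNearIsometryOn T X δ)
    (hδ : δ ≤ 1 / 4) (hu : u ∈ X) (hv : v ∈ X) :
    ‖u‖ * ‖v‖ ≤ 4 / 3 * (‖T u‖ * ‖T v‖) := by
  have hsq : (‖u‖ * ‖v‖) ^ 2 ≤ (4 / 3 * (‖T u‖ * ‖T v‖)) ^ 2 := by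
    rw [mul_pow, mul_pow, mul_pow]
    nlinarith [h.sq_norm_le_mul_sq_norm_map hδ hu, h.sq_norm_le_mul_sq_norm_map hδ hv,
      sq_nonneg ‖u‖, sq_nonneg ‖T v‖]
  exact (pow_le_pow_iff_left₀ (by positivity) (by positivity) two_ne_zero).mp hsq

theorem norm_starProjection_map_le (h : IsNearIsometryOn T X δ) (hδ : δ ∈ Set.Icc 0 (1 / 4))
    {X₁ X₂ : Submodule ℝ E} (hX₁ : X₁ ≤ X) (hX₂ : X₂ ≤ X)
    (horth : ∀ u ∈ X₁, ∀ v ∈ X₂, ⟪u, v⟫ = 0) [(X₂.map T).HasOrthogonalProjection]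
    (hu : u ∈ X₁) : ‖(X₂.map T).starProjection (T u)‖ ≤ 4 / 3 * δ * ‖T u‖ := by
  set p := (X₂.map T).starProjection (T u)
  have hp_mem : p ∈ X₂.map T := (X₂.map T).starProjection_apply_mem (T u)
  obtain ⟨v, hv, hvp⟩ := Submodule.mem_map.mp hp_mem
  have hp_inner : ‖p‖ ^ 2 = ⟪T u, p⟫ := by
    have h0 := (X₂.map T).starProjection_inner_eq_zero (T u) p hp_mem
    rw [inner_sub_left, real_inner_self_eq_norm_sq] at h0
    linarith
  have hsq : ‖p‖ * ‖p‖ ≤ 4 / 3 * δ * ‖T u‖ * ‖p‖ := calc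
    ‖p‖ * ‖p‖ = ⟪T u, T v⟫ := by rw [← sq, hp_inner, hvp]
    _ ≤ δ * ‖u‖ * ‖v‖ :=
      h.inner_map_le_mul_norm_of_inner_eq_zero (hX₁ hu) (hX₂ hv) (horth u hu v hv)
    _ ≤ δ * (4 / 3 * (‖T u‖ * ‖T v‖)) := by
      rw [mul_assoc]
      exact mul_le_mul_of_nonneg_left
        (h.norm_mul_norm_le_mul_norm_map_mul_norm_map hδ.2 (hX₁ hu) (hX₂ hv)) hδ.1
    _ = 4 / 3 * δ * ‖T u‖ * ‖p‖ := by rw [hvp]; ring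
  rcases (norm_nonneg p).eq_or_lt with hp0 | hppos
  · rw [← hp0]; have := hδ.1; positivity
  · exact le_of_mul_le_mul_right hsq hppos

end IsNearIsometryOn

section MatrixColumns

variable {m k : ℕ}

theorem span_range_col_eq_range_toEuclideanLin (A : Matrix (Fin m) (Fin k) ℝ) :
    Submodule.span ℝ (Set.range (col A)) = LinearMap.range (Matrix.toEuclideanLin A) := by
  ext u
  rw [Submodule.mem_span_range_iff_exists_fun, LinearMap.mem_range]
  simp only [toEuclideanLin_apply_eq_sum_col]
  exact ⟨fun ⟨c, hc⟩ => ⟨WithLp.toLp 2 c, hc⟩, fun ⟨x, hx⟩ => ⟨x, hx⟩⟩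

end MatrixColumns

/-- For orthogonal subspaces `X1 ⊥ X2` of `X` on which `Φ` is a near-isometry with
`δ ∈ (0,1/4)`, for nonzero `u ∈ X1`: `‖P_{Y2}Φu‖ ≤ (4/3)·δ·‖Φu‖`. -/
theorem proj_image_orthogonal_le_image_norm {N n d : ℕ} (δ : ℝ)
    (hδ : δ ∈ Set.Ioo (0 : ℝ) (1/4))
    (X X1 X2 : Submodule ℝ (EuclideanSpace ℝ (Fin N)))
    (hX1 : X1 ≤ X) (hX2 : X2 ≤ X)
    (horth : ∀ u ∈ X1, ∀ v ∈ X2, ⟪u, v⟫ = 0)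
    (U : Matrix (Fin N) (Fin d) ℝ)
    (hU : Orthonormal ℝ (col U)) (hs : Submodule.span ℝ (Set.range (col U)) = X)
    (Φ : Matrix (Fin n) (Fin N) ℝ)
    (hiso : ∀ x : EuclideanSpace ℝ (Fin d), ‖x‖ = 1 →
      1 - δ < ‖Matrix.toEuclideanLin (Φ * U) x‖ ^ 2 ∧
      ‖Matrix.toEuclideanLin (Φ * U) x‖ ^ 2 < 1 + δ) :
    ∀ u ∈ X1, u ≠ 0 →
      ‖projE (X2.map (Matrix.toEuclideanLin Φ)) (Matrix.toEuclideanLin Φ u)‖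
        ≤ (4/3) * δ * ‖Matrix.toEuclideanLin Φ u‖ := by
  intro u hu _
  rw [Matrix.toLpLin_mul_same] at hiso
  have hnear : IsNearIsometryOn (Matrix.toEuclideanLin Φ) X δ := by
    rw [← hs, span_range_col_eq_range_toEuclideanLin]
    exact (isNearIsometryOn_top_of_unit hiso).range_of_isometry
      (norm_toEuclideanLin_of_orthonormal hU)
  exact hnear.norm_starProjection_map_le ⟨hδ.1.le, hδ.2.le⟩ hX1 hX2 horth hu
end
end

section
/- (Near-isometry implies subspace RIP for distance.) Under the hypotheses of the main theorem (Φ acting as a near-isometry with parameter δ ∈ (0,1/4) on a subspace X containing X1, X2 with dim X1 ≤ dim X2), there is a universal constant C such that |D(Y1,Y2)^2 − D(X1,X2)^2| ≤ C·δ·D(X1,X2)^2, where D denotes the projection Frobenius-norm distance and Y_i = ΦX_i. -/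
/-!
Write `ρ(A, B) = ∑ᵢ ‖aᵢ - P_B aᵢ‖²` for an orthonormal basis `(aᵢ)` of `A`. Expanding the
Frobenius norm gives `D(A, B)² = ρ(A, B) + (dim B - dim A) / 2`. On `X` the map `Φ` satisfies
`(1 - δ)‖x‖² ≤ ‖Φ x‖² ≤ (1 + δ)‖x‖²`, so it preserves dimensions and only `ρ` changes.
Projecting `Φ u` onto `Φ X₂` is no worse than taking `Φ (P_{X₂} u)`, which costs the upper bound,
and passing from the images of an orthonormal basis of `X₁` to an orthonormal basis of `Φ X₁`
costs the lower bound; this gives `(1 - δ) ρ(ΦX₁, ΦX₂) ≤ (1 + δ) ρ(X₁, X₂)`, and the same argument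
for a left inverse of `Φ` on `X` gives the reverse inequality. Hence
`|ρ(ΦX₁, ΦX₂) - ρ(X₁, X₂)| ≤ 3δ ρ(X₁, X₂) ≤ 3δ D(X₁, X₂)²`, the last step because `d₁ ≤ d₂`.
-/

noncomputable section
open scoped RealInnerProductSpace Matrix

/-- Squared projection Frobenius-norm distance `D(A,B)² = ((1/√2)·‖P_A − P_B‖_F)²`. -/
def Dsq {m : ℕ} (A B : Submodule ℝ (EuclideanSpace ℝ (Fin m))) : ℝ :=
  ((1 / Real.sqrt 2) * frob (LinearMap.toMatrix
    (EuclideanSpace.basisFun (Fin m) ℝ).toBasis (EuclideanSpace.basisFun (Fin m) ℝ).toBasis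
    (projE A - projE B))) ^ 2

section Projection

variable {E : Type*} [NormedAddCommGroup E] [InnerProductSpace ℝ E]
  {ι κ : Type*} [Fintype ι] [Fintype κ]

theorem Submodule.norm_sub_starProjection_le (K : Submodule ℝ E) [K.HasOrthogonalProjection]
    (x : E) {w : E} (hw : w ∈ K) : ‖x - K.starProjection x‖ ≤ ‖x - w‖ := by
  rw [Submodule.starProjection_minimal]
  exact ciInf_le ⟨0, Set.forall_mem_range.2 fun _ => norm_nonneg _⟩ (⟨w, hw⟩ : K)

theorem Submodule.starProjection_apply_eq_sum {K : Submodule ℝ E} [K.HasOrthogonalProjection]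
    (b : OrthonormalBasis ι ℝ K) (x : E) :
    K.starProjection x = ∑ i, ⟪(b i : E), x⟫ • (b i : E) := by
  simp [b.starProjection_eq_sum_rankOne]

theorem Submodule.norm_starProjection_sq {K : Submodule ℝ E} [K.HasOrthogonalProjection]
    (b : OrthonormalBasis ι ℝ K) (x : E) :
    ‖K.starProjection x‖ ^ 2 = ∑ i, ⟪(b i : E), x⟫ ^ 2 := by
  rw [Submodule.starProjection_apply, Submodule.norm_coe,
    ← b.sum_sq_inner_right (K.orthogonalProjectionOnto x)]
  refine Finset.sum_congr rfl fun i _ => ?_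
  simp

theorem Submodule.norm_sub_starProjection_sq {K : Submodule ℝ E} [K.HasOrthogonalProjection]
    (b : OrthonormalBasis ι ℝ K) (x : E) :
    ‖x - K.starProjection x‖ ^ 2 = ‖x‖ ^ 2 - ∑ i, ⟪(b i : E), x⟫ ^ 2 := by
  have h := Submodule.norm_sq_eq_add_norm_sq_starProjection x K
  rw [Submodule.starProjection_orthogonal_val, K.norm_starProjection_sq b] at h
  linarith

theorem sum_norm_starProjection_sq {ι' : Type*} [Fintype ι'] (e : OrthonormalBasis ι' ℝ E)
    {K : Submodule ℝ E} [K.HasOrthogonalProjection] (b : OrthonormalBasis ι ℝ K) :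
    ∑ j, ‖K.starProjection (e j)‖ ^ 2 = Fintype.card ι := by
  simp_rw [K.norm_starProjection_sq b]
  rw [Finset.sum_comm]
  simp_rw [e.sum_sq_inner_left, Submodule.norm_coe, b.orthonormal.1]
  simp

/-- The right-hand side is the squared affinity `aff(A, B)²`. -/
theorem sum_inner_starProjection_starProjection {ι' : Type*} [Fintype ι']
    (e : OrthonormalBasis ι' ℝ E) {A B : Submodule ℝ E}
    [A.HasOrthogonalProjection] [B.HasOrthogonalProjection]
    (a : OrthonormalBasis ι ℝ A) (b : OrthonormalBasis κ ℝ B) :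
    ∑ j, ⟪A.starProjection (e j), B.starProjection (e j)⟫ = ∑ i, ∑ k, ⟪(a i : E), b k⟫ ^ 2 := by
  simp_rw [Submodule.starProjection_apply_eq_sum a, Submodule.starProjection_apply_eq_sum b,
    sum_inner, inner_sum, real_inner_smul_left, real_inner_smul_right]
  rw [Finset.sum_comm]
  refine Finset.sum_congr rfl fun i _ => ?_
  rw [Finset.sum_comm]
  refine Finset.sum_congr rfl fun k _ => ?_
  rw [sq, ← e.sum_inner_mul_inner (a i : E) (b k), Finset.sum_mul]
  refine Finset.sum_congr rfl fun j _ => ?_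
  rw [real_inner_comm (e j) (b k : E)]; ring

end Projection

section Distance

variable {m : ℕ} {ι κ : Type*} [Fintype ι] [Fintype κ]

theorem frob_toMatrix_sq (f : EuclideanSpace ℝ (Fin m) →ₗ[ℝ] EuclideanSpace ℝ (Fin m)) :
    frob (LinearMap.toMatrix (EuclideanSpace.basisFun (Fin m) ℝ).toBasis
      (EuclideanSpace.basisFun (Fin m) ℝ).toBasis f) ^ 2
      = ∑ j, ‖f (EuclideanSpace.basisFun (Fin m) ℝ j)‖ ^ 2 := by
  rw [frob, Real.sq_sqrt (by positivity), Finset.sum_comm]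
  refine Finset.sum_congr rfl fun j _ => ?_
  rw [EuclideanSpace.real_norm_sq_eq]
  simp [LinearMap.toMatrix_apply]

theorem Dsq_eq_sum_norm_sub_starProjection_sq {A B : Submodule ℝ (EuclideanSpace ℝ (Fin m))}
    (a : OrthonormalBasis ι ℝ A) (b : OrthonormalBasis κ ℝ B) :
    Dsq A B = ∑ i, ‖(a i : EuclideanSpace ℝ (Fin m)) - B.starProjection (a i)‖ ^ 2
      + ((Fintype.card κ : ℝ) - Fintype.card ι) / 2 := by
  set e := EuclideanSpace.basisFun (Fin m) ℝ
  have hD : Dsq A B = (∑ j, ‖A.starProjection (e j) - B.starProjection (e j)‖ ^ 2) / 2 := by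
    rw [Dsq, mul_pow, frob_toMatrix_sq, div_pow, one_pow, Real.sq_sqrt zero_le_two]
    simp [projE, e, inv_mul_eq_div]
  have hres : ∑ i, ‖(a i : EuclideanSpace ℝ (Fin m)) - B.starProjection (a i)‖ ^ 2
      = Fintype.card ι - ∑ i, ∑ k, ⟪(a i : EuclideanSpace ℝ (Fin m)), b k⟫ ^ 2 := by
    simp_rw [B.norm_sub_starProjection_sq b, Submodule.norm_coe, a.orthonormal.1, real_inner_comm]
    simp
  simp_rw [hD, hres, norm_sub_sq_real, Finset.sum_add_distrib, Finset.sum_sub_distrib,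
    ← Finset.mul_sum, sum_norm_starProjection_sq e a, sum_norm_starProjection_sq e b,
    sum_inner_starProjection_starProjection e a b]
  ring

end Distance

section Comparison

variable {E F G : Type*} [NormedAddCommGroup E] [InnerProductSpace ℝ E]
  [NormedAddCommGroup F] [InnerProductSpace ℝ F] [NormedAddCommGroup G] [InnerProductSpace ℝ G]
  {ι κ : Type*} [Fintype ι] [Fintype κ]

theorem OrthonormalBasis.orthonormal_coe {K : Submodule ℝ E} (b : OrthonormalBasis ι ℝ K) :
    Orthonormal ℝ fun i => (b i : E) :=
  b.orthonormal.comp_linearIsometry K.subtypeₗᵢ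

theorem mul_sum_sq_inner_le_norm_sq {K : Submodule ℝ E} {T : E →ₗ[ℝ] F} {c : ℝ} (hc : 0 ≤ c)
    (hT : ∀ x ∈ K, c * ‖x‖ ^ 2 ≤ ‖T x‖ ^ 2) {v : κ → E} (hv : ∀ j, v j ∈ K)
    (hTv : Orthonormal ℝ (T ∘ v)) (w : E) :
    c * ∑ j, ⟪w, v j⟫ ^ 2 ≤ ‖w‖ ^ 2 := by
  set s := ∑ j, ⟪w, v j⟫ ^ 2
  set q := ∑ j, ⟪w, v j⟫ • v j
  have hq : c * ‖q‖ ^ 2 ≤ s := by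
    have hTq : ‖T q‖ ^ 2 = s := by
      rw [← real_inner_self_eq_norm_sq]
      simpa [q, s, sq] using hTv.inner_sum (fun j => ⟪w, v j⟫) (fun j => ⟪w, v j⟫) Finset.univ
    exact hTq ▸ hT q (K.sum_mem fun j _ => K.smul_mem _ (hv j))
  have hwq : s ≤ ‖w‖ * ‖q‖ := by
    have : ⟪w, q⟫ = s := by simp [q, s, inner_sum, real_inner_smul_right, sq]
    exact this ▸ real_inner_le_norm w q
  rcases (show 0 ≤ s by positivity).eq_or_lt with hs | hs
  · rw [← hs, mul_zero]; positivity
  · nlinarith [mul_le_mul_of_nonneg_left (pow_le_pow_left₀ hs.le hwq 2) hc]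

/-- The Hilbert–Schmidt bound `‖L V‖_F² ≤ ‖V‖² ‖L U‖_F²` for `V = (vⱼ)`, `U = (uᵢ)`, where
`‖V‖² ≤ c⁻¹` by `mul_sum_sq_inner_le_norm_sq`; it is checked row by row in an orthonormal basis
of `G`. -/
theorem mul_sum_norm_sq_le_of_orthonormal_map [FiniteDimensional ℝ G] {K : Submodule ℝ E}
    {T : E →ₗ[ℝ] F} {c : ℝ} (hc : 0 ≤ c) (hT : ∀ x ∈ K, c * ‖x‖ ^ 2 ≤ ‖T x‖ ^ 2)
    (u : OrthonormalBasis ι ℝ K) {v : κ → E} (hv : ∀ j, v j ∈ K)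
    (hTv : Orthonormal ℝ (T ∘ v)) (L : E →ₗ[ℝ] G) :
    c * ∑ j, ‖L (v j)‖ ^ 2 ≤ ∑ i, ‖L (u i)‖ ^ 2 := by
  let f := stdOrthonormalBasis ℝ G
  let w : Fin (Module.finrank ℝ G) → E := fun t => ∑ i, ⟪L (u i), f t⟫ • (u i : E)
  have hw_inner (t j) : ⟪w t, v j⟫ = ⟪L (v j), f t⟫ := by
    have hvj : v j = ∑ i, ⟪(u i : E), v j⟫ • (u i : E) := by
      simpa using congrArg Subtype.val (u.sum_repr' ⟨v j, hv j⟩).symm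
    conv_rhs => rw [hvj, map_sum]
    simp [w, sum_inner, real_inner_smul_left, mul_comm]
  have hw_norm (t) : ‖w t‖ ^ 2 = ∑ i, ⟪L (u i), f t⟫ ^ 2 := by
    rw [← real_inner_self_eq_norm_sq]
    simpa [w, sq] using u.orthonormal_coe.inner_sum (fun i => ⟪L (u i), f t⟫)
      (fun i => ⟪L (u i), f t⟫) Finset.univ
  calc c * ∑ j, ‖L (v j)‖ ^ 2 = ∑ t, c * ∑ j, ⟪w t, v j⟫ ^ 2 := by
        simp_rw [hw_inner, ← f.sum_sq_inner_left (L _), Finset.mul_sum]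
        rw [Finset.sum_comm]
    _ ≤ ∑ t, ‖w t‖ ^ 2 :=
        Finset.sum_le_sum fun t _ => mul_sum_sq_inner_le_norm_sq hc hT hv hTv (w t)
    _ = ∑ i, ‖L (u i)‖ ^ 2 := by
        simp_rw [hw_norm, ← f.sum_sq_inner_left (L _)]
        rw [Finset.sum_comm]

theorem norm_sub_starProjection_map_sq_le [FiniteDimensional ℝ E] [FiniteDimensional ℝ F]
    {X X2 : Submodule ℝ E} (h2 : X2 ≤ X) {T : E →ₗ[ℝ] F} {C : ℝ}
    (hT : ∀ x ∈ X, ‖T x‖ ^ 2 ≤ C * ‖x‖ ^ 2) {v : E} (hv : v ∈ X) :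
    ‖T v - (X2.map T).starProjection (T v)‖ ^ 2 ≤ C * ‖v - X2.starProjection v‖ ^ 2 := by
  have hmin := (X2.map T).norm_sub_starProjection_le (T v)
    (Submodule.mem_map_of_mem (X2.starProjection_apply_mem v))
  rw [← map_sub] at hmin
  exact (pow_le_pow_left₀ (norm_nonneg _) hmin 2).trans
    (hT _ (X.sub_mem hv (h2 (X2.starProjection_apply_mem v))))

/-- `Y₁`, `Y₂` are kept abstract so that the lemma also applies to a left inverse of `T`. -/
theorem mul_sum_norm_sub_starProjection_sq_le [FiniteDimensional ℝ E] [FiniteDimensional ℝ F]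
    {X X1 X2 : Submodule ℝ E} (h1 : X1 ≤ X) (h2 : X2 ≤ X) {T : E →ₗ[ℝ] F} {c C : ℝ}
    (hc : 0 ≤ c) (hC : 0 ≤ C) (hlow : ∀ x ∈ X1, c * ‖x‖ ^ 2 ≤ ‖T x‖ ^ 2)
    (hup : ∀ x ∈ X, ‖T x‖ ^ 2 ≤ C * ‖x‖ ^ 2) {Y1 Y2 : Submodule ℝ F}
    (hY1 : X1.map T = Y1) (hY2 : X2.map T = Y2)
    (u : OrthonormalBasis ι ℝ X1) (y : OrthonormalBasis κ ℝ Y1) :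
    c * ∑ k, ‖(y k : F) - Y2.starProjection (y k)‖ ^ 2
      ≤ C * ∑ i, ‖(u i : E) - X2.starProjection (u i)‖ ^ 2 := by
  subst hY1 hY2
  choose v hv hTv using fun k => Submodule.mem_map.1 (y k).2
  have hTv_orth : Orthonormal ℝ (T ∘ v) := by
    simpa [Function.comp_def, hTv] using y.orthonormal_coe
  let L : E →ₗ[ℝ] E := LinearMap.id - X2.starProjection.toLinearMap
  calc c * ∑ k, ‖(y k : F) - (X2.map T).starProjection (y k)‖ ^ 2
      ≤ c * ∑ k, C * ‖L (v k)‖ ^ 2 := by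
        gcongr with k
        rw [← hTv k]
        exact norm_sub_starProjection_map_sq_le h2 hup (h1 (hv k))
    _ = C * (c * ∑ k, ‖L (v k)‖ ^ 2) := by rw [← Finset.mul_sum]; ring
    _ ≤ C * ∑ i, ‖L (u i)‖ ^ 2 := by
        gcongr
        exact mul_sum_norm_sq_le_of_orthonormal_map hc hlow u hv hTv_orth L
    _ = C * ∑ i, ‖(u i : E) - X2.starProjection (u i)‖ ^ 2 := rfl

theorem exists_leftInverseOn_of_lowerBound {X : Submodule ℝ E} {T : E →ₗ[ℝ] F} {c : ℝ}
    (hc : 0 < c) (hlow : ∀ x ∈ X, c * ‖x‖ ^ 2 ≤ ‖T x‖ ^ 2) :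
    ∃ S : F →ₗ[ℝ] E, ∀ x ∈ X, S (T x) = x := by
  have hker : LinearMap.ker (T.domRestrict X) = ⊥ := by
    refine LinearMap.ker_eq_bot'.2 fun x hx => ?_
    have h := hlow x x.2
    rw [show T x = 0 by simpa using hx, norm_zero, zero_pow two_ne_zero] at h
    have hx0 : ‖(x : E)‖ ^ 2 = 0 := le_antisymm (nonpos_of_mul_nonpos_right h hc) (sq_nonneg _)
    simpa using hx0
  obtain ⟨g, hg⟩ := (T.domRestrict X).exists_leftInverse_of_injective hker
  exact ⟨X.subtype ∘ₗ g, fun x hx => congrArg Subtype.val (LinearMap.congr_fun hg ⟨x, hx⟩)⟩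

theorem Submodule.map_map_eq_self_of_leftInverseOn {K : Submodule ℝ E} {T : E →ₗ[ℝ] F}
    {S : F →ₗ[ℝ] E} (hS : ∀ x ∈ K, S (T x) = x) : (K.map T).map S = K := by
  ext x
  simp only [Submodule.mem_map]
  constructor
  · rintro ⟨_, ⟨y, hy, rfl⟩, rfl⟩
    rwa [hS y hy]
  · exact fun hx => ⟨T x, ⟨x, hx, rfl⟩, hS x hx⟩

theorem finrank_map_eq_of_lowerBound [FiniteDimensional ℝ E] [FiniteDimensional ℝ F]
    {K : Submodule ℝ E} {T : E →ₗ[ℝ] F} {c : ℝ} (hc : 0 < c)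
    (hlow : ∀ x ∈ K, c * ‖x‖ ^ 2 ≤ ‖T x‖ ^ 2) :
    Module.finrank ℝ (K.map T) = Module.finrank ℝ K := by
  obtain ⟨S, hS⟩ := exists_leftInverseOn_of_lowerBound hc hlow
  refine le_antisymm (Submodule.finrank_map_le T K) ?_
  have h := Submodule.finrank_map_le S (K.map T)
  rwa [Submodule.map_map_eq_self_of_leftInverseOn hS] at h

theorem sum_norm_sub_starProjection_map_sq_bounds [FiniteDimensional ℝ E] [FiniteDimensional ℝ F]
    {X X1 X2 : Submodule ℝ E} (h1 : X1 ≤ X) (h2 : X2 ≤ X) {T : E →ₗ[ℝ] F} {c C : ℝ}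
    (hc : 0 < c) (hC : 0 < C) (hlow : ∀ x ∈ X, c * ‖x‖ ^ 2 ≤ ‖T x‖ ^ 2)
    (hup : ∀ x ∈ X, ‖T x‖ ^ 2 ≤ C * ‖x‖ ^ 2)
    (u : OrthonormalBasis ι ℝ X1) (y : OrthonormalBasis κ ℝ (X1.map T)) :
    c * ∑ k, ‖(y k : F) - (X2.map T).starProjection (y k)‖ ^ 2
        ≤ C * ∑ i, ‖(u i : E) - X2.starProjection (u i)‖ ^ 2 ∧
      c * ∑ i, ‖(u i : E) - X2.starProjection (u i)‖ ^ 2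
        ≤ C * ∑ k, ‖(y k : F) - (X2.map T).starProjection (y k)‖ ^ 2 := by
  refine ⟨mul_sum_norm_sub_starProjection_sq_le h1 h2 hc.le hC.le
    (fun x hx => hlow x (h1 hx)) hup rfl rfl u y, ?_⟩
  obtain ⟨S, hS⟩ := exists_leftInverseOn_of_lowerBound hc hlow
  have hSlow : ∀ z ∈ X.map T, C⁻¹ * ‖z‖ ^ 2 ≤ ‖S z‖ ^ 2 := by
    rintro _ ⟨x, hx, rfl⟩
    rw [hS x hx, inv_mul_le_iff₀ hC]
    exact hup x hx
  have hSup : ∀ z ∈ X.map T, ‖S z‖ ^ 2 ≤ c⁻¹ * ‖z‖ ^ 2 := by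
    rintro _ ⟨x, hx, rfl⟩
    rw [hS x hx, le_inv_mul_iff₀ hc]
    exact hlow x hx
  have h := mul_sum_norm_sub_starProjection_sq_le (Submodule.map_mono h1)
    (Submodule.map_mono h2) (inv_nonneg.2 hC.le) (inv_nonneg.2 hc.le)
    (fun z hz => hSlow z (Submodule.map_mono h1 hz)) hSup
    (Submodule.map_map_eq_self_of_leftInverseOn fun x hx => hS x (h1 hx))
    (Submodule.map_map_eq_self_of_leftInverseOn fun x hx => hS x (h2 hx)) y u
  rw [inv_mul_le_iff₀ hC] at h
  calc _ ≤ c * (C * (c⁻¹ * _)) := by gcongr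
    _ = _ := by field_simp

end Comparison

theorem norm_sq_bounds_of_forall_norm_eq_one {E F : Type*} [NormedAddCommGroup E]
    [NormedSpace ℝ E] [SeminormedAddCommGroup F] [NormedSpace ℝ F] (f : E →ₗ[ℝ] F) {c C : ℝ}
    (hf : ∀ x, ‖x‖ = 1 → c < ‖f x‖ ^ 2 ∧ ‖f x‖ ^ 2 < C) (x : E) :
    c * ‖x‖ ^ 2 ≤ ‖f x‖ ^ 2 ∧ ‖f x‖ ^ 2 ≤ C * ‖x‖ ^ 2 := by
  rcases eq_or_ne x 0 with rfl | hx
  · simp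
  have hx' : ‖x‖ ≠ 0 := norm_ne_zero_iff.2 hx
  obtain ⟨hlo, hhi⟩ := hf (‖x‖⁻¹ • x) (norm_smul_inv_norm hx)
  have hscale : ‖f x‖ ^ 2 = ‖x‖ ^ 2 * ‖f (‖x‖⁻¹ • x)‖ ^ 2 := by
    rw [map_smul, norm_smul, norm_inv, norm_norm, mul_pow, ← mul_assoc, ← mul_pow,
      mul_inv_cancel₀ hx', one_pow, one_mul]
  rw [hscale, mul_comm c, mul_comm C]
  exact ⟨by gcongr, by gcongr⟩

theorem exists_toEuclideanLin_eq_of_mem_span_col {N d : ℕ} {U : Matrix (Fin N) (Fin d) ℝ}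
    (hU : Orthonormal ℝ (col U)) {x : EuclideanSpace ℝ (Fin N)}
    (hx : x ∈ Submodule.span ℝ (Set.range (col U))) :
    ∃ c : EuclideanSpace ℝ (Fin d), Matrix.toEuclideanLin U c = x ∧ ‖c‖ = ‖x‖ := by
  obtain ⟨c, rfl⟩ := (Submodule.mem_span_range_iff_exists_fun ℝ).1 hx
  refine ⟨WithLp.toLp 2 c, ?_, ?_⟩
  · ext t
    simp [col, Matrix.mulVec, dotProduct, mul_comm]
  · rw [← sq_eq_sq₀ (norm_nonneg _) (norm_nonneg _), EuclideanSpace.real_norm_sq_eq,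
      ← real_inner_self_eq_norm_sq, hU.inner_sum]
    simp [sq]

theorem norm_sq_bounds_of_near_isometry {N n d : ℕ} {U : Matrix (Fin N) (Fin d) ℝ}
    (hU : Orthonormal ℝ (col U)) {Φ : Matrix (Fin n) (Fin N) ℝ} {c C : ℝ}
    (hΦ : ∀ x : EuclideanSpace ℝ (Fin d), ‖x‖ = 1 →
      c < ‖Matrix.toEuclideanLin (Φ * U) x‖ ^ 2 ∧ ‖Matrix.toEuclideanLin (Φ * U) x‖ ^ 2 < C)
    {x : EuclideanSpace ℝ (Fin N)} (hx : x ∈ Submodule.span ℝ (Set.range (col U))) :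
    c * ‖x‖ ^ 2 ≤ ‖Matrix.toEuclideanLin Φ x‖ ^ 2 ∧
      ‖Matrix.toEuclideanLin Φ x‖ ^ 2 ≤ C * ‖x‖ ^ 2 := by
  obtain ⟨y, rfl, hy⟩ := exists_toEuclideanLin_eq_of_mem_span_col hU hx
  simpa [hy] using norm_sq_bounds_of_forall_norm_eq_one _ hΦ y

theorem abs_sub_le_of_mul_le_mul {δ a b : ℝ} (hδ0 : 0 ≤ δ) (hδ : δ ≤ 1 / 4)
    (hba : (1 - δ) * b ≤ (1 + δ) * a) (hab : (1 - δ) * a ≤ (1 + δ) * b) :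
    |b - a| ≤ 3 * δ * a := by
  rw [abs_sub_le_iff]
  constructor <;> nlinarith [mul_le_mul_of_nonneg_left hba hδ0, mul_le_mul_of_nonneg_left hab hδ0]

/-- Near-isometry implies subspace RIP for the projection Frobenius-norm distance. -/
theorem near_isometry_implies_subspace_RIP_dist :
    ∃ C : ℝ, 0 < C ∧
      ∀ (N n d d1 d2 : ℕ) (δ : ℝ), δ ∈ Set.Ioo (0 : ℝ) (1/4) →
      ∀ (X X1 X2 : Submodule ℝ (EuclideanSpace ℝ (Fin N))), X1 ≤ X → X2 ≤ X →
        Module.finrank ℝ X = d → Module.finrank ℝ X1 = d1 → Module.finrank ℝ X2 = d2 →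
        d1 ≤ d2 →
      ∀ (U : Matrix (Fin N) (Fin d) ℝ),
        Orthonormal ℝ (col U) → Submodule.span ℝ (Set.range (col U)) = X →
      ∀ (Φ : Matrix (Fin n) (Fin N) ℝ),
        (∀ x : EuclideanSpace ℝ (Fin d), ‖x‖ = 1 →
          1 - δ < ‖Matrix.toEuclideanLin (Φ * U) x‖ ^ 2 ∧
          ‖Matrix.toEuclideanLin (Φ * U) x‖ ^ 2 < 1 + δ) →
        |Dsq (X1.map (Matrix.toEuclideanLin Φ)) (X2.map (Matrix.toEuclideanLin Φ))
          - Dsq X1 X2| ≤ C * δ * Dsq X1 X2 := by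
  refine ⟨3, by norm_num, ?_⟩
  intro N n d d1 d2 δ ⟨hδ0, hδ⟩ X X1 X2 hX1 hX2 _ hd1 hd2 hd12 U hU hUX Φ hΦ
  have hbounds (x) (hx : x ∈ X) := norm_sq_bounds_of_near_isometry hU hΦ (hUX ▸ hx)
  set T := Matrix.toEuclideanLin Φ
  have hc : 0 < 1 - δ := by linarith
  have hC : 0 < 1 + δ := by linarith
  let u := stdOrthonormalBasis ℝ X1
  let y := stdOrthonormalBasis ℝ (X1.map T)
  obtain ⟨hYX, hXY⟩ := sum_norm_sub_starProjection_map_sq_bounds hX1 hX2 hc hC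
    (fun x hx => (hbounds x hx).1) (fun x hx => (hbounds x hx).2) u y
  have hfr1 := finrank_map_eq_of_lowerBound hc fun x hx => (hbounds x (hX1 hx)).1
  have hfr2 := finrank_map_eq_of_lowerBound hc fun x hx => (hbounds x (hX2 hx)).1
  rw [Dsq_eq_sum_norm_sub_starProjection_sq u (stdOrthonormalBasis ℝ X2),
    Dsq_eq_sum_norm_sub_starProjection_sq y (stdOrthonormalBasis ℝ (X2.map T))]
  simp only [Fintype.card_fin, hfr1, hfr2, hd1, hd2, add_sub_add_right_eq_sub]
  have hk : (0 : ℝ) ≤ ((d2 : ℝ) - d1) / 2 := by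
    have : (d1 : ℝ) ≤ d2 := Nat.cast_le.2 hd12
    linarith
  refine (abs_sub_le_of_mul_le_mul hδ0.le hδ.le hYX hXY).trans ?_
  gcongr
  linarith
end
end

section
/- Let X1 be a one-dimensional subspace spanned by a unit vector u1 and X2 a subspace with unit vector u2 achieving λ = ⟨u1,u2⟩ = aff(X2, X1), so that u1 = λ u2 + sqrt(1−λ²) u0 with u0 a unit vector orthogonal to X2. Then for any injective-on-span linear map Φ with Y2 = ΦX2, writing P = P_{Y2}: |aff(Y2, ΦX1)² − λ²| = (1−λ²)/||Φu1||² · | λ²(||Φu2||² − ||Φu0||²) + ||P Φu0||² + 2λ sqrt(1−λ²) ⟨Φu2, Φu0⟩ |. -/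
/-!
Write `Φ u1 = λ Φ u2 + s Φ u0` with `s = √(1 - λ²)`. Since `Φ u2 ∈ Y2`, the projection `P` fixes
`Φ u2` and preserves its inner product with `Φ u0`, so `‖P Φ u1‖²` and `‖Φ u1‖²` have the same
expansion except that `‖Φ u0‖²` is replaced by `‖P Φ u0‖²`. Subtracting `λ² ‖Φ u1‖²` and using
`s² = 1 - λ²` factors out `1 - λ²`.
-/

noncomputable section
open scoped RealInnerProductSpace Matrix

section Expansion

variable {F : Type*} [NormedAddCommGroup F] [InnerProductSpace ℝ F]

theorem norm_smul_add_smul_sq (a b : ℝ) (v w : F) :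
    ‖a • v + b • w‖ ^ 2 = a ^ 2 * ‖v‖ ^ 2 + 2 * a * b * ⟪v, w⟫ + b ^ 2 * ‖w‖ ^ 2 := by
  rw [norm_add_sq_real, norm_smul, norm_smul, real_inner_smul_left, real_inner_smul_right,
    Real.norm_eq_abs, Real.norm_eq_abs, mul_pow, mul_pow, sq_abs, sq_abs]
  ring

variable (K : Submodule ℝ F) [K.HasOrthogonalProjection]

theorem norm_starProjection_smul_add_smul_sq {v : F} (hv : v ∈ K) (a b : ℝ) (w : F) :
    ‖K.starProjection (a • v + b • w)‖ ^ 2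
      = a ^ 2 * ‖v‖ ^ 2 + 2 * a * b * ⟪v, w⟫ + b ^ 2 * ‖K.starProjection w‖ ^ 2 := by
  have hPv : K.starProjection v = v := K.starProjection_eq_self_iff.mpr hv
  have hinner : ⟪v, K.starProjection w⟫ = ⟪v, w⟫ := by
    simpa only [hPv] using (K.inner_starProjection_left_eq_right v w).symm
  rw [map_add, map_smul, map_smul, hPv, norm_smul_add_smul_sq, hinner]

theorem norm_starProjection_sq_sub_sq_mul_norm_sq {v : F} (hv : v ∈ K) (w : F) {lam : ℝ}
    (hlam : lam ^ 2 ≤ 1) :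
    ‖K.starProjection (lam • v + √(1 - lam ^ 2) • w)‖ ^ 2
        - lam ^ 2 * ‖lam • v + √(1 - lam ^ 2) • w‖ ^ 2
      = (1 - lam ^ 2) * (lam ^ 2 * (‖v‖ ^ 2 - ‖w‖ ^ 2) + ‖K.starProjection w‖ ^ 2
          + 2 * lam * √(1 - lam ^ 2) * ⟪v, w⟫) := by
  have hs : √(1 - lam ^ 2) ^ 2 = 1 - lam ^ 2 := Real.sq_sqrt (by linarith)
  rw [norm_starProjection_smul_add_smul_sq K hv, norm_smul_add_smul_sq]
  linear_combination (‖K.starProjection w‖ ^ 2 - lam ^ 2 * ‖w‖ ^ 2) * hs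

end Expansion

theorem abs_div_sq_sub_sq {p x : ℝ} (hx : x ≠ 0) (c : ℝ) :
    |(p / x) ^ 2 - c| = |p ^ 2 - c * x ^ 2| / x ^ 2 := by
  rw [div_pow, div_sub' (pow_ne_zero 2 hx), abs_div, abs_of_pos (by positivity : 0 < x ^ 2),
    mul_comm]

theorem projE_apply {m : ℕ} (K : Submodule ℝ (EuclideanSpace ℝ (Fin m)))
    (x : EuclideanSpace ℝ (Fin m)) : projE K x = K.starProjection x :=
  rfl

theorem line_affinity_deviation_general {N n : ℕ}
    (X2 : Submodule ℝ (EuclideanSpace ℝ (Fin N)))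
    (u1 u2 u0 : EuclideanSpace ℝ (Fin N)) (lam : ℝ)
    (hu2X : u2 ∈ X2)
    (hlam0 : 0 < lam) (hlam1 : lam < 1)
    (hdecomp : u1 = lam • u2 + Real.sqrt (1 - lam ^ 2) • u0)
    (Φ : EuclideanSpace ℝ (Fin N) →ₗ[ℝ] EuclideanSpace ℝ (Fin n))
    (hΦu1 : Φ u1 ≠ 0) :
    |(‖projE (X2.map Φ) (Φ u1)‖ / ‖Φ u1‖) ^ 2 - lam ^ 2|
      = (1 - lam ^ 2) / ‖Φ u1‖ ^ 2
        * |lam ^ 2 * (‖Φ u2‖ ^ 2 - ‖Φ u0‖ ^ 2)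
            + ‖projE (X2.map Φ) (Φ u0)‖ ^ 2
            + 2 * lam * Real.sqrt (1 - lam ^ 2) * ⟪Φ u2, Φ u0⟫| := by
  have hΦdecomp : Φ u1 = lam • Φ u2 + √(1 - lam ^ 2) • Φ u0 := by
    rw [hdecomp, map_add, map_smul, map_smul]
  have hlam_sq : lam ^ 2 < 1 := by nlinarith
  rw [abs_div_sq_sub_sq (norm_ne_zero_iff.mpr hΦu1), projE_apply, projE_apply, hΦdecomp,
    norm_starProjection_sq_sub_sq_mul_norm_sq _ (Submodule.mem_map_of_mem hu2X) _ hlam_sq.le,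
    abs_mul, abs_of_pos (sub_pos.mpr hlam_sq)]
  ring

/-- One-dimensional affinity deviation formula under a linear map `Φ`. -/
theorem line_affinity_deviation {N n : ℕ}
    (X2 : Submodule ℝ (EuclideanSpace ℝ (Fin N)))
    (u1 u2 u0 : EuclideanSpace ℝ (Fin N)) (lam : ℝ)
    (hu1 : ‖u1‖ = 1) (hu2 : ‖u2‖ = 1) (hu2X : u2 ∈ X2) (hu0 : ‖u0‖ = 1)
    (hu0X : ∀ y ∈ X2, ⟪u0, y⟫ = 0)
    (hlam : lam = ⟪u1, u2⟫) (hlam0 : 0 < lam) (hlam1 : lam < 1)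
    (hdecomp : u1 = lam • u2 + Real.sqrt (1 - lam ^ 2) • u0)
    (Φ : EuclideanSpace ℝ (Fin N) →ₗ[ℝ] EuclideanSpace ℝ (Fin n))
    (hΦu1 : Φ u1 ≠ 0) :
    |(‖projE (X2.map Φ) (Φ u1)‖ / ‖Φ u1‖) ^ 2 - lam ^ 2|
      = (1 - lam ^ 2) / ‖Φ u1‖ ^ 2
        * |lam ^ 2 * (‖Φ u2‖ ^ 2 - ‖Φ u0‖ ^ 2)
            + ‖projE (X2.map Φ) (Φ u0)‖ ^ 2
            + 2 * lam * Real.sqrt (1 - lam ^ 2) * ⟪Φ u2, Φ u0⟫| :=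
  line_affinity_deviation_general X2 u1 u2 u0 lam hu2X hlam0 hlam1 hdecomp Φ hΦu1
end
end
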